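/- The condition r^c = c is not sufficient for rationality: there exists a choice correspondence c on a three-element set X = {x,y,z} with c({x,y}) = {x,y}, c({x,z}) = {z}, c({y,z}) = {y}, c({x,y,z}) = {x,y}, which satisfies r^c(A) = c(A) for all menus A but is not rationalizable by any weak order (it fails Sen's α axiom). -/
import Mathlib


open Set

variable {X : Type*}

/-- A complete and transitive binary relation (weak order). -/
def WeakOrd (R : X → X → Prop) : Prop :=
  (∀ x y, R x y ∨ R y x) ∧ (∀ ⦃x y z⦄, R x y → R y z → R x z)

/-- A linear order: an antisymmetric weak order. -/
def LinOrdRel (L : X → X → Prop) : Prop :=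
  WeakOrd L ∧ ∀ ⦃x y⦄, L x y → L y x → x = y

/-- max(A,R): the R-maximal elements of A. -/
def maxSet (R : X → X → Prop) (A : Set X) : Set X := {x ∈ A | ∀ y ∈ A, R x y}

/-- m is the L-minimum of S: every member of S is L-above m. -/
def IsMinOf (L : X → X → Prop) (S : Set X) (m : X) : Prop := m ∈ S ∧ ∀ y ∈ S, L y m

/-- A choice correspondence: nonempty-valued and c(A) ⊆ A on every menu. -/
def ChoiceCorr (c : Set X → Set X) : Prop :=
  ∀ ⦃A : Set X⦄, A.Nonempty → (c A).Nonempty ∧ c A ⊆ A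

/-- Minimal compromise representation by a weak order R and linear order L. -/
def MCRep (c : Set X → Set X) (R L : X → X → Prop) : Prop :=
  WeakOrd R ∧ LinOrdRel L ∧
  ∀ ⦃A : Set X⦄, A.Nonempty →
    ((∃ a, maxSet R A = {a}) → c A = maxSet R A) ∧
    (¬ (∃ a, maxSet R A = {a}) →
      ∃ m, IsMinOf L (maxSet R A) m ∧ c A = maxSet R A \ {m})

/-- r^c(A): elements whose removal changes choice (with r^c(A) = A on singletons). -/
def rC (c : Set X → Set X) (A : Set X) : Set X :=
  {x ∈ A | (∃ a, A = {a}) ∨ c (A \ {x}) ≠ c A}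
open Classical in
noncomputable def cEx (A : Set (Fin 3)) : Set (Fin 3) :=
  if 2 ∈ A ∧ 0 ∈ A ∧ 1 ∉ A then {2}
  else if 2 ∈ A ∧ 1 ∈ A ∧ 0 ∉ A then {1}
  else if 0 ∈ A ∨ 1 ∈ A then A \ {2}
  else A

lemma cEx_single (a : Fin 3) : cEx {a} = {a} := by
  fin_cases a <;> simp [cEx, Set.ext_iff]

lemma cEx01 : cEx {0,1} = {0,1} := by simp [cEx, Set.ext_iff]
lemma cEx02 : cEx {0,2} = {2} := by simp [cEx]
lemma cEx12 : cEx {1,2} = {1} := by simp [cEx]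
lemma cEx012 : cEx {0,1,2} = {0,1} := by simp [cEx, Set.ext_iff]; decide

lemma classify (A : Set (Fin 3)) (hA : A.Nonempty) :
    A = {0} ∨ A = {1} ∨ A = {2} ∨ A = {0,1} ∨ A = {0,2} ∨ A = {1,2} ∨ A = {0,1,2} := by
  by_cases h0 : (0:Fin 3) ∈ A <;> by_cases h1 : (1:Fin 3) ∈ A <;> by_cases h2 : (2:Fin 3) ∈ A
  · exact Or.inr (Or.inr (Or.inr (Or.inr (Or.inr (Or.inr (by ext x; fin_cases x <;> simp_all))))))
  · exact Or.inr (Or.inr (Or.inr (Or.inl (by ext x; fin_cases x <;> simp_all))))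
  · exact Or.inr (Or.inr (Or.inr (Or.inr (Or.inl (by ext x; fin_cases x <;> simp_all)))))
  · exact Or.inl (by ext x; fin_cases x <;> simp_all)
  · exact Or.inr (Or.inr (Or.inr (Or.inr (Or.inr (Or.inl (by ext x; fin_cases x <;> simp_all))))))
  · exact Or.inr (Or.inl (by ext x; fin_cases x <;> simp_all))
  · exact Or.inr (Or.inr (Or.inl (by ext x; fin_cases x <;> simp_all)))
  · exact absurd hA (by rw [Set.nonempty_iff_ne_empty]; simp; ext x; fin_cases x <;> simp_all)

lemma not_single {A : Set (Fin 3)} {u v : Fin 3} (hu : u ∈ A) (hv : v ∈ A)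
    (huv : u ≠ v) : ¬ ∃ a, A = {a} := by rintro ⟨a, rfl⟩; simp_all

lemma rc_single (a : Fin 3) : rC cEx {a} = {a} := by
  have h : ∃ b : Fin 3, ({a} : Set (Fin 3)) = {b} := ⟨a, rfl⟩
  ext x; simp [rC, h]

lemma rc_pair : rC cEx {0,1} = cEx {0,1} := by
  have d0 : ({0,1} : Set (Fin 3)) \ {0} = {1} := by simp [Set.ext_iff] <;> decide
  have d1 : ({0,1} : Set (Fin 3)) \ {1} = {0} := by simp [Set.ext_iff] <;> decide
  rw [cEx01]
  ext x; fin_cases x <;>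
    simp [rC, d0, d1, cEx01, cEx_single, Set.ext_iff] <;> decide

lemma rc02 : rC cEx {0,2} = cEx {0,2} := by
  have d0 : ({0,2} : Set (Fin 3)) \ {0} = {2} := by simp [Set.ext_iff] <;> decide
  have d2 : ({0,2} : Set (Fin 3)) \ {2} = {0} := by simp [Set.ext_iff] <;> decide
  have hne : ¬ ∃ a : Fin 3, ({0,2} : Set (Fin 3)) = {a} :=
    not_single (by simp) (by simp) (by decide : (0:Fin 3) ≠ 2)
  rw [cEx02]
  ext x; fin_cases x <;>
    simp [rC, d0, d2, cEx02, cEx_single, hne, Set.ext_iff] <;> decide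

lemma rc12 : rC cEx {1,2} = cEx {1,2} := by
  have d1 : ({1,2} : Set (Fin 3)) \ {1} = {2} := by simp [Set.ext_iff] <;> decide
  have d2 : ({1,2} : Set (Fin 3)) \ {2} = {1} := by simp [Set.ext_iff] <;> decide
  have hne : ¬ ∃ a : Fin 3, ({1,2} : Set (Fin 3)) = {a} :=
    not_single (by simp) (by simp) (by decide : (1:Fin 3) ≠ 2)
  rw [cEx12]
  ext x; fin_cases x <;>
    simp [rC, d1, d2, cEx12, cEx_single, hne, Set.ext_iff] <;> decide

lemma rc012 : rC cEx {0,1,2} = cEx {0,1,2} := by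
  have d0 : ({0,1,2} : Set (Fin 3)) \ {0} = {1,2} := by simp [Set.ext_iff] <;> decide
  have d1 : ({0,1,2} : Set (Fin 3)) \ {1} = {0,2} := by simp [Set.ext_iff] <;> decide
  have d2 : ({0,1,2} : Set (Fin 3)) \ {2} = {0,1} := by simp [Set.ext_iff] <;> decide
  have hne : ¬ ∃ a : Fin 3, ({0,1,2} : Set (Fin 3)) = {a} :=
    not_single (by simp) (by simp) (by decide : (0:Fin 3) ≠ 1)
  rw [cEx012]
  ext x; fin_cases x <;>
    simp [rC, d0, d1, d2, cEx012, cEx01, cEx02, cEx12, hne, Set.ext_iff] <;> decide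

lemma cEx_corr : ChoiceCorr cEx := by
  intro A hA
  rcases classify A hA with h|h|h|h|h|h|h <;> subst h <;>
    first
    | exact ⟨by rw [cEx_single]; exact ⟨_, rfl⟩, by rw [cEx_single]⟩
    | (constructor <;> simp [cEx01, cEx02, cEx12, cEx012, Set.subset_def] <;> decide)

/-- r^c = c is not sufficient for rationality (X = Fin 3, x=0, y=1, z=2). -/
theorem rc_eq_c_not_sufficient :
    ∃ c : Set (Fin 3) → Set (Fin 3), ChoiceCorr c ∧
      (∀ a : Fin 3, c {a} = {a}) ∧
      c {0, 1} = {0, 1} ∧ c {0, 2} = {2} ∧ c {1, 2} = {1} ∧ c {0, 1, 2} = {0, 1} ∧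
      (∀ ⦃A : Set (Fin 3)⦄, A.Nonempty → rC c A = c A) ∧
      ¬ (∃ R : Fin 3 → Fin 3 → Prop, WeakOrd R ∧
          ∀ ⦃A : Set (Fin 3)⦄, A.Nonempty → c A = maxSet R A) ∧
      ¬ (∀ ⦃A B : Set (Fin 3)⦄ ⦃x : Fin 3⦄, B.Nonempty → B ⊂ A →
          x ∈ c A → x ∈ B → x ∈ c B) := by
  refine ⟨cEx, cEx_corr, fun a => cEx_single a, cEx01, cEx02, cEx12, cEx012, ?_, ?_, ?_⟩
  · intro A hA
    rcases classify A hA with h|h|h|h|h|h|h <;> subst h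
    · rw [rc_single, cEx_single]
    · rw [rc_single, cEx_single]
    · rw [rc_single, cEx_single]
    · exact rc_pair
    · exact rc02
    · exact rc12
    · exact rc012
  · rintro ⟨R, ⟨hcomp, htrans⟩, hmax⟩
    have h02 := hmax (show ({0,2} : Set (Fin 3)).Nonempty from ⟨0, by simp⟩)
    rw [cEx02] at h02
    have h012 := hmax (show ({0,1,2} : Set (Fin 3)).Nonempty from ⟨0, by simp⟩)
    rw [cEx012] at h012
    have h0 : (0:Fin 3) ∈ maxSet R {0,1,2} := by
      rw [← h012]; simp
    have hR02 : R 0 2 := h0.2 2 (by simp)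
    have hR00 : R 0 0 := (hcomp 0 0).elim id id
    have hmem : (0:Fin 3) ∈ maxSet R {0,2} := by
      refine ⟨by simp, ?_⟩
      intro y hy
      rcases hy with h | h
      · subst h; exact hR00
      · simp at h; subst h; exact hR02
    rw [← h02] at hmem
    simp at hmem
  · intro h
    have hss : ({0,2} : Set (Fin 3)) ⊂ {0,1,2} := by
      constructor
      · intro t ht; simp at ht ⊢; tauto
      · intro hsub
        have : (1:Fin 3) ∈ ({0,2} : Set (Fin 3)) := hsub (by simp)
        simp at this
    have := h (show ({0,2} : Set (Fin 3)).Nonempty from ⟨0, by simp⟩) hss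
      (show (0:Fin 3) ∈ cEx {0,1,2} by rw [cEx012]; simp) (by simp)
    rw [cEx02] at this
    simp at this
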